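/- For a random staircase generator matrix code with profile (w_0,...,w_{k-1}), the expected weight enumerator of the subcode class C_ℓ = {uG : u ∈ U_ℓ} equals B^{(ℓ)}(X) = 2^ℓ · X^{w_ℓ} · ((1+X)/2)^{n_ℓ - w_ℓ}, where n_ℓ = ∑_{i≤ℓ} w_i. Equivalently, the expected number of codewords in C_ℓ of Hamming weight w_ℓ + t equals 2^ℓ · C(n_ℓ - w_ℓ, t) · 2^{-(n_ℓ - w_ℓ)} for 0 ≤ t ≤ n_ℓ - w_ℓ. -/

import Mathlib

open scoped Classical

open Finset

-- ===== auxiliary machinery =====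

lemma tool {α β : Type*} [Fintype α] [DecidableEq β]
    (T : α → β) (S : Finset β) (c : ℕ)
    (hmaps : ∀ a, T a ∈ S)
    (hfib : ∀ g ∈ S, (Finset.univ.filter (fun a => T a = g)).card = c)
    (f : β → ℝ) :
    ∑ a, f (T a) = c * ∑ g ∈ S, f g := by
  rw [← Finset.sum_fiberwise_of_maps_to (fun a _ => hmaps a) (fun a => f (T a)), Finset.mul_sum]
  refine Finset.sum_congr rfl fun g hg => ?_
  rw [Finset.sum_congr rfl (fun a ha => show f (T a) = f g by
        rw [(Finset.mem_filter.mp ha).2]), Finset.sum_const, hfib g hg]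
  simp [nsmul_eq_mul]

lemma count_weight (N t : ℕ) :
    ((Finset.univ : Finset (Fin N → ZMod 2)).filter (fun v => hammingNorm v = t)).card
      = N.choose t := by
  have h2 : ∀ x : ZMod 2, x ≠ 0 → x = 1 := by decide
  have hp := Finset.card_powersetCard t (Finset.univ : Finset (Fin N))
  rw [Finset.card_univ, Fintype.card_fin] at hp
  rw [← hp]
  refine Finset.card_bij' (fun v _ => Finset.univ.filter (fun i => v i ≠ 0))
    (fun s _ => fun i => if i ∈ s then 1 else 0) ?_ ?_ ?_ ?_
  · intro v hv
    rw [Finset.mem_powersetCard]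
    exact ⟨Finset.subset_univ _, by simpa [hammingNorm] using (Finset.mem_filter.mp hv).2⟩
  · intro s hs
    rw [Finset.mem_powersetCard] at hs
    simp only [Finset.mem_filter, Finset.mem_univ, true_and, hammingNorm]
    rw [← hs.2]
    congr 1
    ext i
    by_cases h : i ∈ s <;> simp [h]
  · intro v hv
    funext i
    by_cases h : v i ≠ 0
    · simp only [Finset.mem_filter, Finset.mem_univ, true_and]
      rw [if_pos h]
      exact (h2 _ h).symm
    · simp only [Finset.mem_filter, Finset.mem_univ, true_and]
      rw [if_neg h]
      push_neg at h; exact h.symm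
  · intro s hs
    ext i
    simp only [Finset.mem_filter, Finset.mem_univ, true_and]
    by_cases h : i ∈ s <;> simp [h]

lemma card_U (k : ℕ) (ℓ : Fin k) :
    ((Finset.univ : Finset (Fin k → ZMod 2)).filter
      (fun u => u ℓ = 1 ∧ ∀ i, ℓ < i → u i = 0)).card = 2 ^ ℓ.val := by
  have : ((Finset.univ : Finset (Fin k → ZMod 2)).filter
      (fun u => u ℓ = 1 ∧ ∀ i, ℓ < i → u i = 0)).card
      = (Finset.univ : Finset (Fin ℓ.val → ZMod 2)).card := by
    refine Finset.card_bij' (fun u _ => fun j : Fin ℓ.val => u ⟨j.val, j.2.trans ℓ.2⟩)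
      (fun x _ => fun i : Fin k => if h : i.val < ℓ.val then x ⟨i.val, h⟩
        else if i.val = ℓ.val then 1 else 0) (fun _ _ => Finset.mem_univ _) ?_ ?_ ?_
    · intro x _
      rw [Finset.mem_filter]
      refine ⟨Finset.mem_univ _, ?_, ?_⟩
      · dsimp only
        rw [dif_neg (lt_irrefl _), if_pos rfl]
      · intro i hi
        have hv := Fin.lt_iff_val_lt_val.mp hi
        dsimp only
        rw [dif_neg (by omega), if_neg (by omega)]
    · intro u hu
      rw [Finset.mem_filter] at hu
      obtain ⟨-, hu1, hu2⟩ := hu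
      funext i
      dsimp only
      by_cases h : i.val < ℓ.val
      · rw [dif_pos h]
      · rw [dif_neg h]
        by_cases h2 : i.val = ℓ.val
        · rw [if_pos h2]
          have : i = ℓ := Fin.ext h2
          rw [this, hu1]
        · rw [if_neg h2]
          exact (hu2 i (Fin.lt_iff_val_lt_val.mpr (by omega))).symm
    · intro x _
      funext j
      dsimp only
      rw [dif_pos j.2]
  rw [this]
  simp

def Tfill (k n : ℕ) (w : ℕ → ℕ) (A : Fin k → Fin n → ZMod 2) : Fin k → Fin n → ZMod 2 :=
  fun m s => if s.val < ∑ i ∈ Finset.range m.val, w i then A m s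
    else if s.val < ∑ i ∈ Finset.range (m.val + 1), w i then 1 else 0

lemma Tfill_congr {k n : ℕ} {w : ℕ → ℕ} {A B : Fin k → Fin n → ZMod 2} {m : Fin k} {s : Fin n}
    (h : A m s = B m s) : Tfill k n w A m s = Tfill k n w B m s := by
  unfold Tfill
  split_ifs <;> simp [h]

lemma Tfill_free {k n : ℕ} {w : ℕ → ℕ} {A : Fin k → Fin n → ZMod 2} {m : Fin k} {s : Fin n}
    (h : s.val < ∑ i ∈ Finset.range m.val, w i) : Tfill k n w A m s = A m s := if_pos h

lemma Tfill_nonfree {k n : ℕ} {w : ℕ → ℕ} {A B : Fin k → Fin n → ZMod 2} {m : Fin k} {s : Fin n}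
    (h : ¬ s.val < ∑ i ∈ Finset.range m.val, w i) :
    Tfill k n w A m s = Tfill k n w B m s := by
  unfold Tfill
  rw [if_neg h, if_neg h]

lemma Tfill_idem (k n : ℕ) (w : ℕ → ℕ) (A : Fin k → Fin n → ZMod 2) :
    Tfill k n w (Tfill k n w A) = Tfill k n w A := by
  funext m s
  by_cases h : s.val < ∑ i ∈ Finset.range m.val, w i
  · rw [Tfill_free h]
  · exact Tfill_nonfree h

lemma fiberT {k n : ℕ} {w : ℕ → ℕ} (g g' : Fin k → Fin n → ZMod 2)
    (hg : Tfill k n w g = g) (hg' : Tfill k n w g' = g') :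
    ((Finset.univ.filter (fun A => Tfill k n w A = g)) : Finset (Fin k → Fin n → ZMod 2)).card
    = (Finset.univ.filter (fun A => Tfill k n w A = g')).card := by
  have key : ∀ (p q : Fin k → Fin n → ZMod 2), Tfill k n w p = p → Tfill k n w q = q →
      ∀ A, Tfill k n w A = p → Tfill k n w (fun m s => A m s + p m s + q m s) = q := by
    intro p q hp hq A hA
    funext m s
    by_cases h : s.val < ∑ i ∈ Finset.range m.val, w i
    · rw [Tfill_free h]
      have h1 : A m s = p m s := by
        rw [← Tfill_free (A := A) h, hA]
      rw [h1]
      have : ∀ a b : ZMod 2, a + a + b = b := by decide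
      exact this _ _
    · rw [Tfill_nonfree (B := q) h, hq]
  refine Finset.card_bij' (fun A _ => fun m s => A m s + g m s + g' m s)
    (fun A _ => fun m s => A m s + g' m s + g m s) ?_ ?_ ?_ ?_
  · intro A hA
    rw [Finset.mem_filter] at hA ⊢
    exact ⟨Finset.mem_univ _, key g g' hg hg' A hA.2⟩
  · intro A hA
    rw [Finset.mem_filter] at hA ⊢
    exact ⟨Finset.mem_univ _, key g' g hg' hg A hA.2⟩
  · intro A _
    funext m s
    dsimp only
    have : ∀ a b c : ZMod 2, a + b + c + c + b = a := by decide
    exact this _ _ _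
  · intro A _
    funext m s
    dsimp only
    have : ∀ a b c : ZMod 2, a + b + c + c + b = a := by decide
    exact this _ _ _

def rho (k n N : ℕ) (hN : N ≤ n) (ℓ : Fin k) (A : Fin k → Fin n → ZMod 2) : Fin N → ZMod 2 :=
  fun j => A ℓ ⟨j.val, lt_of_lt_of_le j.2 hN⟩

lemma fiberRho {k n N : ℕ} (hN : N ≤ n) (ℓ : Fin k) (v v' : Fin N → ZMod 2) :
    ((Finset.univ.filter (fun A => rho k n N hN ℓ A = v)) :
      Finset (Fin k → Fin n → ZMod 2)).card
    = (Finset.univ.filter (fun A => rho k n N hN ℓ A = v')).card := by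
  have key : ∀ (p q : Fin N → ZMod 2) A, rho k n N hN ℓ A = p →
      rho k n N hN ℓ (fun m s => if h : m = ℓ ∧ s.val < N
        then A m s + p ⟨s.val, h.2⟩ + q ⟨s.val, h.2⟩ else A m s) = q := by
    intro p q A hA
    funext j
    unfold rho
    dsimp only
    rw [dif_pos ⟨rfl, j.2⟩]
    have h1 : A ℓ ⟨j.val, lt_of_lt_of_le j.2 hN⟩ = p j := congrFun hA j
    have h2 : (⟨(⟨j.val, lt_of_lt_of_le j.2 hN⟩ : Fin n).val, j.2⟩ : Fin N) = j := rfl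
    rw [h2, h1]
    have : ∀ a b : ZMod 2, a + a + b = b := by decide
    exact this _ _
  refine Finset.card_bij'
    (fun A _ => fun m s => if h : m = ℓ ∧ s.val < N
        then A m s + v ⟨s.val, h.2⟩ + v' ⟨s.val, h.2⟩ else A m s)
    (fun A _ => fun m s => if h : m = ℓ ∧ s.val < N
        then A m s + v' ⟨s.val, h.2⟩ + v ⟨s.val, h.2⟩ else A m s) ?_ ?_ ?_ ?_
  · intro A hA
    rw [Finset.mem_filter] at hA ⊢
    exact ⟨Finset.mem_univ _, key v v' A hA.2⟩
  · intro A hA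
    rw [Finset.mem_filter] at hA ⊢
    exact ⟨Finset.mem_univ _, key v' v A hA.2⟩
  · intro A _
    funext m s
    dsimp only
    by_cases h : m = ℓ ∧ s.val < N
    · rw [dif_pos h, dif_pos h]
      have : ∀ a b c : ZMod 2, a + b + c + c + b = a := by decide
      exact this _ _ _
    · rw [dif_neg h, dif_neg h]
  · intro A _
    funext m s
    dsimp only
    by_cases h : m = ℓ ∧ s.val < N
    · rw [dif_pos h, dif_pos h]
      have : ∀ a b c : ZMod 2, a + b + c + c + b = a := by decide
      exact this _ _ _
    · rw [dif_neg h, dif_neg h]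

lemma card_block (n a b : ℕ) (hb : b ≤ n) :
    ((Finset.univ : Finset (Fin n)).filter (fun s => a ≤ s.val ∧ s.val < b)).card = b - a := by
  rw [← Nat.card_Ico a b]
  refine Finset.card_bij' (fun s _ => s.val)
    (fun x hx => ⟨x, lt_of_lt_of_le (Finset.mem_Ico.mp hx).2 hb⟩) ?_ ?_ ?_ ?_
  · intro s hs
    rw [Finset.mem_filter] at hs
    rw [Finset.mem_Ico]
    exact hs.2
  · intro x hx
    rw [Finset.mem_Ico] at hx
    rw [Finset.mem_filter]
    exact ⟨Finset.mem_univ _, hx⟩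
  · intro s _; rfl
  · intro x _; rfl

lemma card_low {n N : ℕ} (hN : N ≤ n) (v : Fin n → ZMod 2) :
    ((Finset.univ : Finset (Fin n)).filter (fun s => s.val < N ∧ v s ≠ 0)).card
    = ((Finset.univ : Finset (Fin N)).filter
        (fun j => v ⟨j.val, lt_of_lt_of_le j.2 hN⟩ ≠ 0)).card := by
  refine Finset.card_bij' (fun s hs => ⟨s.val, (Finset.mem_filter.mp hs).2.1⟩)
    (fun j _ => ⟨j.val, lt_of_lt_of_le j.2 hN⟩) ?_ ?_ ?_ ?_
  · intro s hs
    obtain ⟨-, h1, h2⟩ := Finset.mem_filter.mp hs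
    exact Finset.mem_filter.mpr ⟨Finset.mem_univ _, h2⟩
  · intro j hj
    obtain ⟨-, h2⟩ := Finset.mem_filter.mp hj
    exact Finset.mem_filter.mpr ⟨Finset.mem_univ _, j.2, h2⟩
  · intro s _; exact Fin.ext rfl
  · intro j _; exact Fin.ext rfl

def psi (k n N : ℕ) (w : ℕ → ℕ) (ℓ : Fin k) (u : Fin k → ZMod 2)
    (A : Fin k → Fin n → ZMod 2) : Fin k → Fin n → ZMod 2 :=
  fun m s => if h : m = ℓ ∧ s.val < N
    then A m s + ∑ m' ∈ Finset.univ.erase ℓ, u m' * Tfill k n w A m' s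
    else A m s

lemma psi_apply_pos (k n N : ℕ) (w : ℕ → ℕ) (ℓ : Fin k) (u : Fin k → ZMod 2)
    (A : Fin k → Fin n → ZMod 2) {m : Fin k} {s : Fin n} (h : m = ℓ ∧ s.val < N) :
    psi k n N w ℓ u A m s
      = A m s + ∑ m' ∈ Finset.univ.erase ℓ, u m' * Tfill k n w A m' s := by
  unfold psi; rw [dif_pos h]

lemma psi_apply_neg (k n N : ℕ) (w : ℕ → ℕ) (ℓ : Fin k) (u : Fin k → ZMod 2)
    (A : Fin k → Fin n → ZMod 2) {m : Fin k} {s : Fin n} (h : ¬ (m = ℓ ∧ s.val < N)) :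
    psi k n N w ℓ u A m s = A m s := by
  unfold psi; rw [dif_neg h]

lemma psi_invol (k n N : ℕ) (w : ℕ → ℕ) (ℓ : Fin k) (u : Fin k → ZMod 2) :
    Function.Involutive (psi k n N w ℓ u) := by
  intro A
  funext m s
  by_cases h : m = ℓ ∧ s.val < N
  · have hrow : ∀ m' ∈ Finset.univ.erase ℓ, ∀ s' : Fin n,
        psi k n N w ℓ u A m' s' = A m' s' := by
      intro m' hm' s'
      unfold psi
      rw [dif_neg (fun hc => (Finset.mem_erase.mp hm').1 hc.1)]
    have hsum : ∑ m' ∈ Finset.univ.erase ℓ, u m' * Tfill k n w (psi k n N w ℓ u A) m' s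
        = ∑ m' ∈ Finset.univ.erase ℓ, u m' * Tfill k n w A m' s := by
      refine Finset.sum_congr rfl (fun m' hm' => ?_)
      rw [Tfill_congr (hrow m' hm' s)]
    rw [psi_apply_pos _ _ _ _ _ _ _ h, psi_apply_pos _ _ _ _ _ _ _ h, hsum]
    have : ∀ a b : ZMod 2, a + b + b = a := by decide
    exact this _ _
  · rw [psi_apply_neg _ _ _ _ _ _ _ h, psi_apply_neg _ _ _ _ _ _ _ h]

-- ===== main theorem =====

/-- For the random SGMC ensemble with profile `w` (uniform over all
staircase generator matrices), the expected number of codewords `uG` with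
`u ∈ U_ℓ` of Hamming weight `w ℓ + t` equals
`2^ℓ · C(n_{ℓ-1}, t) · 2^{-n_{ℓ-1}}` where `n_{ℓ-1} = ∑_{i<ℓ} w i`,
i.e. the expected weight enumerator of `C_ℓ` is `2^ℓ X^{w_ℓ} ((1+X)/2)^{n_ℓ-w_ℓ}`. -/
theorem stmt_7 (k n : ℕ) (w : ℕ → ℕ)
    (hpos : ∀ ℓ, ℓ < k → 1 ≤ w ℓ)
    (hsum : ∑ i ∈ Finset.range k, w i = n)
    (ℓ : Fin k) (t : ℕ) (ht : t ≤ ∑ i ∈ Finset.range ℓ.val, w i)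
    (S : Finset (Fin k → Fin n → ZMod 2))
    (hS : S = Finset.univ.filter (fun G : Fin k → Fin n → ZMod 2 =>
      ∀ (m : Fin k) (s : Fin n),
        ((∑ i ∈ Finset.range m.val, w i) ≤ s.val ∧
          s.val < ∑ i ∈ Finset.range (m.val + 1), w i → G m s = 1) ∧
        ((∑ i ∈ Finset.range (m.val + 1), w i) ≤ s.val → G m s = 0))) :
    (∑ G ∈ S, ((Finset.univ.filter (fun u : Fin k → ZMod 2 =>
        u ℓ = 1 ∧ (∀ i : Fin k, ℓ < i → u i = 0) ∧
        hammingNorm (Matrix.vecMul u (Matrix.of G)) = w ℓ.val + t)).card : ℝ))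
      / (S.card : ℝ)
      = 2 ^ ℓ.val * (Nat.choose (∑ i ∈ Finset.range ℓ.val, w i) t : ℝ)
          * (2 : ℝ) ^ (-((∑ i ∈ Finset.range ℓ.val, w i : ℕ) : ℤ)) := by
  classical
  set N := ∑ i ∈ Finset.range ℓ.val, w i with hNdef
  have hmono : ∀ a b : ℕ, a ≤ b →
      (∑ i ∈ Finset.range a, w i) ≤ ∑ i ∈ Finset.range b, w i :=
    fun a b h => Finset.sum_le_sum_of_subset (Finset.range_subset_range.mpr h)
  have hl1 : (∑ i ∈ Finset.range (ℓ.val + 1), w i) ≤ n := by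
    rw [← hsum]; exact hmono _ _ ℓ.2
  have hsucc : (∑ i ∈ Finset.range (ℓ.val + 1), w i) = N + w ℓ.val :=
    Finset.sum_range_succ _ _
  have hNn : N ≤ n := le_trans (by omega) hl1
  -- membership characterization
  have hmem : ∀ G, G ∈ S ↔ Tfill k n w G = G := by
    intro G
    rw [hS, Finset.mem_filter]
    constructor
    · rintro ⟨-, hG⟩
      funext m s
      unfold Tfill
      split_ifs with h1 h2
      · rfl
      · exact ((hG m s).1 ⟨le_of_not_gt h1, h2⟩).symm
      · exact ((hG m s).2 (le_of_not_gt h2)).symm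
    · intro hG
      refine ⟨Finset.mem_univ _, fun m s => ⟨fun hms => ?_, fun hms => ?_⟩⟩
      · conv_lhs => rw [← hG]
        unfold Tfill
        rw [if_neg (not_lt.mpr hms.1), if_pos hms.2]
      · conv_lhs => rw [← hG]
        unfold Tfill
        rw [if_neg (not_lt.mpr (le_trans (hmono m.val (m.val + 1) (Nat.le_succ _)) hms)),
          if_neg (not_lt.mpr hms)]
  have hTS : ∀ A, Tfill k n w A ∈ S := fun A => (hmem _).mpr (Tfill_idem k n w A)
  set c : ℕ := (Finset.univ.filter
    (fun A => Tfill k n w A = Tfill k n w 0)).card with hcdef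
  have hfibT : ∀ g ∈ S, (Finset.univ.filter (fun A => Tfill k n w A = g)).card = c :=
    fun g hg => fiberT g (Tfill k n w 0) ((hmem g).mp hg) (Tfill_idem k n w 0)
  set c' : ℕ := (Finset.univ.filter (fun A => rho k n N hNn ℓ A = 0)).card with hc'def
  have hfibR : ∀ v ∈ (Finset.univ : Finset (Fin N → ZMod 2)),
      (Finset.univ.filter (fun A => rho k n N hNn ℓ A = v)).card = c' :=
    fun v _ => fiberRho hNn ℓ v 0
  set U := Finset.univ.filter
    (fun u : Fin k → ZMod 2 => u ℓ = 1 ∧ ∀ i, ℓ < i → u i = 0) with hUdef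
  -- the counting function
  set F : (Fin k → Fin n → ZMod 2) → ℝ := fun G => ((Finset.univ.filter
      (fun u : Fin k → ZMod 2 => u ℓ = 1 ∧ (∀ i : Fin k, ℓ < i → u i = 0) ∧
        hammingNorm (Matrix.vecMul u (Matrix.of G)) = w ℓ.val + t)).card : ℝ) with hFdef
  have tool1 := tool (Tfill k n w) S c hTS hfibT F
  have tool1' : ((Fintype.card (Fin k → Fin n → ZMod 2) : ℕ) : ℝ)
      = c * (S.card : ℝ) := by
    have h := tool (Tfill k n w) S c hTS hfibT (fun _ => (1 : ℝ))
    simpa using h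
  have tool2' : ((Fintype.card (Fin k → Fin n → ZMod 2) : ℕ) : ℝ)
      = c' * (2 : ℝ) ^ N := by
    have h := tool (rho k n N hNn ℓ) Finset.univ c' (fun A => Finset.mem_univ _) hfibR
      (fun _ => (1 : ℝ))
    simp only [Finset.sum_const, Finset.card_univ, nsmul_eq_mul, mul_one] at h
    rw [h]
    congr 1
    rw [show Fintype.card (Fin N → ZMod 2) = 2 ^ N by simp]
    push_cast
    ring
  -- split the count over u ∈ U
  have hsplit : ∀ A, F (Tfill k n w A) = ∑ u ∈ U,
      (if hammingNorm (Matrix.vecMul u (Matrix.of (Tfill k n w A))) = w ℓ.val + t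
        then (1 : ℝ) else 0) := by
    intro A
    rw [hFdef]
    have e : (Finset.univ.filter (fun u : Fin k → ZMod 2 => u ℓ = 1 ∧
        (∀ i : Fin k, ℓ < i → u i = 0) ∧
        hammingNorm (Matrix.vecMul u (Matrix.of (Tfill k n w A))) = w ℓ.val + t))
        = U.filter (fun u =>
          hammingNorm (Matrix.vecMul u (Matrix.of (Tfill k n w A))) = w ℓ.val + t) := by
      rw [hUdef, Finset.filter_filter]
      exact Finset.filter_congr (fun u _ => by tauto)
    dsimp only
    rw [e, Finset.card_filter]
    push_cast
    rfl
  -- weight formula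
  have hweight : ∀ u ∈ U, ∀ A,
      hammingNorm (Matrix.vecMul u (Matrix.of (Tfill k n w A)))
      = (Finset.univ.filter
          (fun s : Fin n => s.val < N ∧ psi k n N w ℓ u A ℓ s ≠ 0)).card + w ℓ.val := by
    intro u hu A
    obtain ⟨-, hu1, hu2⟩ := Finset.mem_filter.mp (hUdef ▸ hu)
    set v : Fin n → ZMod 2 := Matrix.vecMul u (Matrix.of (Tfill k n w A)) with hv
    have hva : ∀ s, v s = ∑ m, u m * Tfill k n w A m s := by
      intro s; rw [hv]; simp [Matrix.vecMul, dotProduct]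
    have hmid : ∀ s : Fin n, N ≤ s.val → v s = Tfill k n w A ℓ s := by
      intro s hs
      rw [hva]
      rw [Finset.sum_eq_single ℓ]
      · rw [hu1, one_mul]
      · intro m _ hm
        rcases Nat.lt_or_ge m.val ℓ.val with hlt | hge
        · have hz : Tfill k n w A m s = 0 := by
            unfold Tfill
            rw [if_neg (not_lt.mpr (le_trans (le_trans
                (hmono m.val (m.val + 1) (Nat.le_succ _)) (hmono _ _ hlt)) hs)),
              if_neg (not_lt.mpr (le_trans (hmono _ _ hlt) hs))]
          rw [hz, mul_zero]
        · have hne : m.val ≠ ℓ.val := fun hh => hm (Fin.ext hh)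
          have hlm : ℓ < m := Fin.lt_iff_val_lt_val.mpr (by omega)
          rw [hu2 m hlm, zero_mul]
      · intro h; exact absurd (Finset.mem_univ ℓ) h
    have hone : ∀ s : Fin n, N ≤ s.val → s.val < N + w ℓ.val → v s = 1 := by
      intro s h1 h2
      rw [hmid s h1]
      unfold Tfill
      rw [if_neg (not_lt.mpr h1), if_pos (by rw [hsucc]; exact h2)]
    have hzero : ∀ s : Fin n, N + w ℓ.val ≤ s.val → v s = 0 := by
      intro s h1
      rw [hmid s (by omega)]
      unfold Tfill
      rw [if_neg (not_lt.mpr (by omega)), if_neg (by rw [hsucc]; omega)]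
    have hlow : ∀ s : Fin n, s.val < N → v s = psi k n N w ℓ u A ℓ s := by
      intro s hs
      rw [hva, psi_apply_pos k n N w ℓ u A ⟨rfl, hs⟩,
        ← Finset.add_sum_erase _ _ (Finset.mem_univ ℓ), hu1, one_mul, Tfill_free hs]
    have hsplit2 := Finset.card_filter_add_card_filter_not
      (s := Finset.univ.filter (fun s : Fin n => v s ≠ 0)) (p := fun s : Fin n => s.val < N)
    have e1 : (Finset.univ.filter (fun s : Fin n => v s ≠ 0)).filter
        (fun s : Fin n => s.val < N)
        = Finset.univ.filter (fun s : Fin n => s.val < N ∧ psi k n N w ℓ u A ℓ s ≠ 0) := by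
      rw [Finset.filter_filter]
      refine Finset.filter_congr (fun s _ => ?_)
      constructor
      · rintro ⟨h1, h2⟩; exact ⟨h2, by rw [← hlow s h2]; exact h1⟩
      · rintro ⟨h1, h2⟩; exact ⟨by rw [hlow s h1]; exact h2, h1⟩
    have e2 : (Finset.univ.filter (fun s : Fin n => v s ≠ 0)).filter
        (fun s : Fin n => ¬ s.val < N)
        = Finset.univ.filter (fun s : Fin n => N ≤ s.val ∧ s.val < N + w ℓ.val) := by
      rw [Finset.filter_filter]
      refine Finset.filter_congr (fun s _ => ?_)
      constructor
      · rintro ⟨h1, h2⟩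
        refine ⟨by omega, ?_⟩
        by_contra hcon
        exact h1 (hzero s (by omega))
      · rintro ⟨h1, h2⟩
        refine ⟨?_, by omega⟩
        rw [hone s h1 h2]
        exact one_ne_zero
    have e3 : (Finset.univ.filter
        (fun s : Fin n => N ≤ s.val ∧ s.val < N + w ℓ.val)).card = w ℓ.val := by
      rw [card_block n N (N + w ℓ.val) (by rw [← hsucc]; exact hl1)]
      omega
    rw [show hammingNorm v = (Finset.univ.filter (fun s : Fin n => v s ≠ 0)).card from rfl,
      ← hsplit2, e1, e2, e3]
  -- per-u sum over all matrices
  have hperu : ∀ u ∈ U, (∑ A : Fin k → Fin n → ZMod 2,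
      (if hammingNorm (Matrix.vecMul u (Matrix.of (Tfill k n w A))) = w ℓ.val + t
        then (1 : ℝ) else 0)) = c' * (N.choose t : ℝ) := by
    intro u hu
    have step1 : ∀ A : Fin k → Fin n → ZMod 2,
        (if hammingNorm (Matrix.vecMul u (Matrix.of (Tfill k n w A))) = w ℓ.val + t
          then (1 : ℝ) else 0)
        = (if hammingNorm (rho k n N hNn ℓ (psi k n N w ℓ u A)) = t
          then (1 : ℝ) else 0) := by
      intro A
      refine if_congr ?_ rfl rfl
      rw [hweight u hu A]
      have hr : hammingNorm (rho k n N hNn ℓ (psi k n N w ℓ u A))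
          = (Finset.univ.filter
            (fun s : Fin n => s.val < N ∧ psi k n N w ℓ u A ℓ s ≠ 0)).card := by
        rw [card_low hNn (psi k n N w ℓ u A ℓ)]
        rfl
      rw [hr]
      omega
    rw [Finset.sum_congr rfl (fun A _ => step1 A)]
    rw [show (∑ A : Fin k → Fin n → ZMod 2,
        (if hammingNorm (rho k n N hNn ℓ (psi k n N w ℓ u A)) = t then (1 : ℝ) else 0))
        = ∑ A : Fin k → Fin n → ZMod 2,
          (if hammingNorm (rho k n N hNn ℓ A) = t then (1 : ℝ) else 0) from
      Fintype.sum_equiv (psi_invol k n N w ℓ u).toPerm _ _ (fun A => rfl)]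
    rw [tool (rho k n N hNn ℓ) Finset.univ c' (fun A => Finset.mem_univ _) hfibR
      (fun v => if hammingNorm v = t then (1 : ℝ) else 0)]
    congr 1
    rw [Finset.sum_boole, count_weight]
  -- assemble
  have hmain : (c : ℝ) * ∑ G ∈ S, F G
      = 2 ^ ℓ.val * ((c' : ℝ) * (N.choose t : ℝ)) := by
    rw [← tool1, Finset.sum_congr rfl (fun A _ => hsplit A), Finset.sum_comm,
      Finset.sum_congr rfl hperu, Finset.sum_const]
    rw [hUdef, card_U k ℓ]
    push_cast
    ring
  -- nonvanishing
  have hCApos : (0 : ℝ) < ((Fintype.card (Fin k → Fin n → ZMod 2) : ℕ) : ℝ) := by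
    exact_mod_cast Fintype.card_pos
  have hc0 : (c : ℝ) ≠ 0 := by
    intro h
    rw [h, zero_mul] at tool1'
    exact hCApos.ne' tool1'
  have hs0 : ((S.card : ℕ) : ℝ) ≠ 0 := by
    intro h
    rw [h, mul_zero] at tool1'
    exact hCApos.ne' tool1'
  have hc'0 : (c' : ℝ) ≠ 0 := by
    intro h
    rw [h, zero_mul] at tool2'
    exact hCApos.ne' tool2'
  have hP0 : (2 : ℝ) ^ N ≠ 0 := by positivity
  -- final computation
  rw [zpow_neg, zpow_natCast, div_eq_iff hs0]
  have key0 : (c : ℝ) * (c' : ℝ) * ((∑ G ∈ S, F G) * (2 : ℝ) ^ N)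
      = (c : ℝ) * (c' : ℝ) * (2 ^ ℓ.val * (N.choose t : ℝ) * ((S.card : ℕ) : ℝ)) := by
    linear_combination ((c' : ℝ) * (2 : ℝ) ^ N) * hmain
      + (2 ^ ℓ.val * (N.choose t : ℝ) * (c' : ℝ)) * tool1'
      - (2 ^ ℓ.val * (N.choose t : ℝ) * (c' : ℝ)) * tool2'
  have key1 := mul_left_cancel₀ (mul_ne_zero hc0 hc'0) key0
  field_simp
  linear_combination key1
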